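/- arXiv:1303.6873 — 4 statements merged into one kernel-verified Lean document; each statement's English description precedes it below -/
import Mathlib

section
/- Let $(f_{i,j})_{i,j\in\mathbb{N}}$ be a doubly-indexed family of nonnegative functions on $[0,\infty)$. Set $f_i = \sum_j f_{i,j}$ and $f = \sum_i f_i$. Suppose that for every $i,j$ the function $f_{i,j}$ converges at infinity to a limit $l_{i,j}$, and that $f$ converges at infinity to $l = \sum_{i,j} l_{i,j}$. Then for every $i$, the function $f_i$ converges at infinity and its limit is $l_i = \sum_j l_{i,j}$. -/
/-!
Fatou's lemma in the form of lower semicontinuity of `∑'`: since every `f i j` tends to `l i j`,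
`liminf f_i ≥ l_i`, and likewise the remaining terms `r = f - f_i` satisfy
`liminf r ≥ l - l_i`. As `f → l < ∞`, this leaves room only for `limsup f_i ≤ l - (l - l_i) = l_i`.
-/

open Filter Topology ENNReal

namespace ENNReal

variable {α : Type*} {F : Filter α}

theorem limsup_le_of_tendsto_add {u v : α → ℝ≥0∞} {a b : ℝ≥0∞} (hb : b ≠ ∞)
    (hv : b ≤ liminf v F) (huv : Tendsto (u + v) F (𝓝 (a + b))) : limsup u F ≤ a := by
  refine ENNReal.le_of_forall_pos_le_add fun ε hε ha ↦ ?_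
  have hlt : a + b < a + ε + b :=
    ENNReal.add_lt_add_right hb (ENNReal.lt_add_right ha.ne (by simpa using hε.ne'))
  have hu : ∀ᶠ t in F, u t ≤ a + ε + b - v t :=
    (huv.eventually (gt_mem_nhds hlt)).mono fun t ht ↦
      ENNReal.le_sub_of_add_le_right (le_add_self.trans_lt ht).ne_top ht.le
  calc limsup u F ≤ limsup (fun t ↦ a + ε + b - v t) F := limsup_le_limsup hu
    _ = a + ε + b - liminf v F := ENNReal.limsup_const_sub F v (by finiteness)
    _ ≤ a + ε + b - b := tsub_le_tsub_left hv _
    _ = a + ε := ENNReal.add_sub_cancel_right hb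

theorem tendsto_of_le_liminf_of_tendsto_add {u v : α → ℝ≥0∞} {a b : ℝ≥0∞}
    (hb : b ≠ ∞) (hu : a ≤ liminf u F) (hv : b ≤ liminf v F)
    (huv : Tendsto (u + v) F (𝓝 (a + b))) : Tendsto u F (𝓝 a) :=
  tendsto_of_le_liminf_of_limsup_le hu (limsup_le_of_tendsto_add hb hv huv)

theorem le_liminf_tsum {ι : Type*} {g : ι → α → ℝ≥0∞} {m : ι → ℝ≥0∞}
    (h : ∀ j, Tendsto (g j) F (𝓝 (m j))) : ∑' j, m j ≤ liminf (fun t ↦ ∑' j, g j t) F := by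
  have hlsc : LowerSemicontinuous fun x : ι → ℝ≥0∞ ↦ ∑' j, x j :=
    lowerSemicontinuous_tsum fun j ↦ (continuous_apply j).lowerSemicontinuous
  rw [le_liminf_iff]
  exact fun y hy ↦ (tendsto_pi_nhds.2 h).eventually (hlsc m y hy)

theorem tsum_tsum_eq_tsum_add_tsum_ite {ι κ : Type*} [DecidableEq ι] (g : ι → κ → ℝ≥0∞) (i : ι) :
    ∑' k, ∑' j, g k j = ∑' j, g i j + ∑' p : ι × κ, if p.1 = i then 0 else g p.1 p.2 := by
  rw [ENNReal.tsum_eq_add_tsum_ite i, ENNReal.tsum_prod']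
  congr 2 with k
  split_ifs <;> simp

end ENNReal

theorem stmt0_general (f : ℕ → ℕ → ℝ → ℝ≥0∞) (l : ℕ → ℕ → ℝ≥0∞)
    (hlim : ∀ i j, Tendsto (f i j) atTop (𝓝 (l i j)))
    (hsumfin : (∑' (i : ℕ) (j : ℕ), l i j) ≠ ∞)
    (hglobal : Tendsto (fun t => ∑' (i : ℕ) (j : ℕ), f i j t) atTop
      (𝓝 (∑' (i : ℕ) (j : ℕ), l i j))) :
    ∀ i, Tendsto (fun t => ∑' (j : ℕ), f i j t) atTop (𝓝 (∑' (j : ℕ), l i j)) := by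
  intro i
  rw [ENNReal.tsum_tsum_eq_tsum_add_tsum_ite l i] at hsumfin hglobal
  simp only [ENNReal.tsum_tsum_eq_tsum_add_tsum_ite (f · · _) i] at hglobal
  refine ENNReal.tendsto_of_le_liminf_of_tendsto_add (ne_top_of_le_ne_top hsumfin le_add_self)
    (ENNReal.le_liminf_tsum (hlim i)) (ENNReal.le_liminf_tsum fun p ↦ ?_) hglobal
  split_ifs
  · exact tendsto_const_nhds
  · exact hlim p.1 p.2

/-- Lemma 4.3 of the paper: if each `f i j` converges at infinity to `l i j`
(all finite), and the total sum `f = ∑ i, ∑ j, f i j` converges to the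
(finite) total sum `l = ∑ i, ∑ j, l i j`, then each partial sum
`f i = ∑ j, f i j` converges to `l i = ∑ j, l i j`. -/
theorem stmt0 (f : ℕ → ℕ → ℝ → ℝ≥0∞) (l : ℕ → ℕ → ℝ≥0∞)
    (hlim : ∀ i j, Tendsto (f i j) atTop (𝓝 (l i j)))
    (hlfin : ∀ i j, l i j ≠ ∞)
    (hsumfin : (∑' (i : ℕ) (j : ℕ), l i j) ≠ ∞)
    (hglobal : Tendsto (fun t => ∑' (i : ℕ) (j : ℕ), f i j t) atTop
      (𝓝 (∑' (i : ℕ) (j : ℕ), l i j))) :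
    ∀ i, Tendsto (fun t => ∑' (j : ℕ), f i j t) atTop (𝓝 (∑' (j : ℕ), l i j)) :=
  stmt0_general f l hlim hsumfin hglobal
end

section
/- A metric space $(T,d)$ is an $\mathbb{R}$-tree if and only if it is connected and satisfies the four-point condition: for all $x,y,u,v \in T$, $d(x,y)+d(u,v) \le \max(d(x,u)+d(y,v),\, d(x,v)+d(y,u))$. -/
/-- `φ` is a distance-preserving parametrization of a segment from `x` to `y`. -/
def IsSegmentMap {T : Type*} [MetricSpace T] (x y : T)
    (φ : Set.Icc (0 : ℝ) (dist x y) → T) : Prop :=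
  (∀ a b, dist (φ a) (φ b) = |a.1 - b.1|) ∧
    φ ⟨0, Set.mem_Icc.mpr ⟨le_rfl, dist_nonneg⟩⟩ = x ∧
    φ ⟨dist x y, Set.mem_Icc.mpr ⟨dist_nonneg, le_rfl⟩⟩ = y

/-- A metric space is an `ℝ`-tree: any two points are joined by a unique isometric
segment, and any continuous injective path has the segment as its image. -/
def IsRTree (T : Type*) [MetricSpace T] : Prop :=
  (∀ x y : T, ∃! φ : Set.Icc (0 : ℝ) (dist x y) → T, IsSegmentMap x y φ) ∧
  (∀ c : Set.Icc (0 : ℝ) 1 → T, Continuous c → Function.Injective c →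
    ∀ φ, IsSegmentMap (c ⟨0, Set.mem_Icc.mpr ⟨le_rfl, zero_le_one⟩⟩)
        (c ⟨1, Set.mem_Icc.mpr ⟨zero_le_one, le_rfl⟩⟩) φ →
      Set.range c = Set.range φ)


/-!
Write `(a|b)_w` for the Gromov product `gromovProduct w a b`. The four-point condition is
equivalent to the ultrametric inequality `min (a|c)_w (c|b)_w ≤ (a|b)_w`.

In an `ℝ`-tree, the segments `[x,y]` and `[x,z]` agree on a longest common initial piece
`[x,w]`, and beyond `w` they are disjoint. So `[y,w]` followed by `[w,z]` is an injective path,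
which by (ii) is the segment `[y,z]`; hence `d(x,w) = (y|z)_x`. Thus `[x,y]` and `[x,z]` pass
through the same point at distance `r` from `x` exactly when `r ≤ (y|z)_x`, and since this
relation between segments is transitive, the ultrametric inequality follows. Segments also make
`T` path connected.

Conversely, let `T` be connected with the four-point condition. Near a point `p` with
`(p|y)_x = t < d(x,p)` the function `(·|y)_x` is constant, so if no point `p` satisfies
`d(x,p) = t` and `d(p,y) = d(x,y) - t`, then `{p | t ≤ (p|y)_x}` is clopen, which is absurd;
the four-point condition also makes such a point unique, which gives unique segments. If
`d(p,q) = d(p,m) + d(m,q)`, then `r ↦ (p|r)_m > 0` splits `T \ {m}` into two open pieces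
separating `p` from `q`, so every connected set containing `p` and `q` contains `m`. Thus an
injective path meets every point of the segment joining its ends, and it cannot leave the
segment: it would have to pass twice through the projection of a point off the segment.
-/

open Set Function

noncomputable def gromovProduct {T : Type*} [MetricSpace T] (w a b : T) : ℝ :=
  (dist w a + dist w b - dist a b) / 2

def FourPointCondition (T : Type*) [MetricSpace T] : Prop :=
  ∀ x y u v : T, dist x y + dist u v ≤ max (dist x u + dist y v) (dist x v + dist y u)

theorem add_mul_sub_mem_Icc {a b c d : ℝ} (ha : a ∈ Icc c d) (hb : b ∈ Icc c d)
    (t : unitInterval) : a + t * (b - a) ∈ Icc c d := by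
  simpa only [smul_eq_mul] using (convex_Icc c d).add_smul_sub_mem ha hb t.2

theorem Path.injective_trans {X : Type*} [TopologicalSpace X] {a b c : X}
    {γ₁ : Path a b} {γ₂ : Path b c} (h₁ : Injective γ₁) (h₂ : Injective γ₂)
    (h : ∀ s t, γ₁ s = γ₂ t → γ₁ s = b) : Injective (γ₁.trans γ₂) := by
  have hjunction : ∀ s t, γ₁ s = γ₂ t → (s : ℝ) = 1 ∧ (t : ℝ) = 0 := fun s t hst =>
    ⟨congrArg Subtype.val (h₁ ((h s t hst).trans γ₁.target.symm)),
      congrArg Subtype.val (h₂ (hst.symm.trans ((h s t hst).trans γ₂.source.symm)))⟩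
  intro s t hst
  simp only [Path.trans_apply] at hst
  split_ifs at hst with hs ht ht
  · exact Subtype.ext (by linarith [congrArg Subtype.val (h₁ hst)])
  · obtain ⟨hs', ht'⟩ := hjunction _ _ hst
    simp only at hs' ht'
    linarith
  · obtain ⟨ht', hs'⟩ := hjunction _ _ hst.symm
    simp only at hs' ht'
    linarith
  · exact Subtype.ext (by linarith [congrArg Subtype.val (h₂ hst)])

section MetricSpace

variable {T : Type*} [MetricSpace T]

theorem gromovProduct_comm (w a b : T) : gromovProduct w a b = gromovProduct w b a := by
  rw [gromovProduct, gromovProduct, dist_comm a b, add_comm (dist w a)]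

theorem gromovProduct_nonneg (w a b : T) : 0 ≤ gromovProduct w a b := by
  unfold gromovProduct
  linarith [dist_triangle_left a b w]

theorem gromovProduct_le_dist_left (w a b : T) : gromovProduct w a b ≤ dist w a := by
  unfold gromovProduct
  linarith [dist_triangle w a b]

theorem gromovProduct_le_dist_right (w a b : T) : gromovProduct w a b ≤ dist w b :=
  gromovProduct_comm w a b ▸ gromovProduct_le_dist_left w b a

theorem dist_sub_dist_le_gromovProduct (w a b : T) :
    dist w a - dist a b ≤ gromovProduct w a b := by
  unfold gromovProduct
  linarith [dist_triangle w b a, dist_comm a b]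

theorem continuous_gromovProduct_left (w b : T) : Continuous fun a => gromovProduct w a b := by
  unfold gromovProduct
  fun_prop

theorem fourPoint_iff_min_gromovProduct_le (x y u v : T) :
    dist x y + dist u v ≤ max (dist x u + dist y v) (dist x v + dist y u) ↔
      min (gromovProduct v x u) (gromovProduct v u y) ≤ gromovProduct v x y := by
  have := dist_comm v x; have := dist_comm v y; have := dist_comm u v; have := dist_comm u y
  rw [le_max_iff, min_le_iff]
  unfold gromovProduct
  exact or_congr ⟨fun _ => by linarith, fun _ => by linarith⟩
    ⟨fun _ => by linarith, fun _ => by linarith⟩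

theorem fourPointCondition_iff : FourPointCondition T ↔
    ∀ x y u v : T, min (gromovProduct v x u) (gromovProduct v u y) ≤ gromovProduct v x y :=
  forall₄_congr fourPoint_iff_min_gromovProduct_le

namespace IsSegmentMap

variable {x y : T} {φ : Icc (0 : ℝ) (dist x y) → T}

theorem dist_left (hφ : IsSegmentMap x y φ) (t : Icc (0 : ℝ) (dist x y)) : dist x (φ t) = t := by
  have h := hφ.1 ⟨0, ⟨le_rfl, dist_nonneg⟩⟩ t
  rwa [hφ.2.1, zero_sub, abs_neg, abs_of_nonneg t.2.1] at h

theorem dist_right (hφ : IsSegmentMap x y φ) (t : Icc (0 : ℝ) (dist x y)) :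
    dist (φ t) y = dist x y - t := by
  conv_lhs => rw [← hφ.2.2]
  rw [hφ.1, abs_of_nonpos (sub_nonpos.2 t.2.2), neg_sub]

theorem isometry (hφ : IsSegmentMap x y φ) : Isometry φ :=
  Isometry.of_dist_eq fun a b => by rw [hφ.1, Subtype.dist_eq, Real.dist_eq]

end IsSegmentMap

namespace FourPointCondition

theorem gromovProduct_eq_of_lt (H : FourPointCondition T) {w a b c : T}
    (h : gromovProduct w a b < gromovProduct w a c) :
    gromovProduct w c b = gromovProduct w a b := by
  have h₁ := fourPointCondition_iff.1 H c b a w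
  have h₂ := fourPointCondition_iff.1 H a b c w
  rw [gromovProduct_comm w c a, min_eq_right h.le] at h₁
  rcases min_le_iff.1 h₂ with h₂ | h₂ <;> linarith

theorem eq_of_dist_eq (H : FourPointCondition T) {x y p q : T} {t : ℝ}
    (hxp : dist x p = t) (hpy : dist p y = dist x y - t)
    (hxq : dist x q = t) (hqy : dist q y = dist x y - t) : p = q := by
  refine dist_le_zero.1 ?_
  rcases le_max_iff.1 (H x y p q) with h | h <;> linarith [dist_comm y p, dist_comm y q]

theorem exists_dist_eq [PreconnectedSpace T] (H : FourPointCondition T) (x y : T) {t : ℝ}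
    (ht₀ : 0 ≤ t) (ht : t ≤ dist x y) : ∃ p, dist x p = t ∧ dist p y = dist x y - t := by
  by_contra! hne
  have hlt : ∀ p, gromovProduct x p y = t → t < dist x p := fun p hp =>
    (hp ▸ gromovProduct_le_dist_left x p y).lt_of_ne fun hxp =>
      hne p hxp.symm (by rw [gromovProduct] at hp; linarith)
  have hlevel : IsOpen {p | gromovProduct x p y = t} := by
    refine Metric.isOpen_iff.2 fun p hp => ⟨dist x p - t, sub_pos.2 (hlt p hp), fun q hq => ?_⟩
    rw [Metric.mem_ball, dist_comm] at hq
    have hp' : gromovProduct x p y = t := hp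
    have hpq := dist_sub_dist_le_gromovProduct x p q
    exact (H.gromovProduct_eq_of_lt (by linarith)).trans hp'
  have hclopen : IsClopen {p | t ≤ gromovProduct x p y} := by
    refine ⟨isClosed_le continuous_const (continuous_gromovProduct_left x y), ?_⟩
    have hsplit : {p | t ≤ gromovProduct x p y} =
        {p | t < gromovProduct x p y} ∪ {p | gromovProduct x p y = t} := by
      ext p
      exact (le_iff_lt_or_eq (a := t)).trans (or_congr_right eq_comm)
    rw [hsplit]
    exact (isOpen_lt continuous_const (continuous_gromovProduct_left x y)).union hlevel
  have hxy : gromovProduct x x y = 0 := by simp [gromovProduct]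
  have hyy : gromovProduct x y y = dist x y := by simp [gromovProduct]
  rcases isClopen_iff.1 hclopen with hempty | huniv
  · exact (eq_empty_iff_forall_notMem.1 hempty) y (show t ≤ gromovProduct x y y from hyy ▸ ht)
  · have hx : t ≤ gromovProduct x x y := (eq_univ_iff_forall.1 huniv) x
    exact hne x (by rw [dist_self]; linarith) (by linarith)

theorem isSegmentMap (H : FourPointCondition T) {x y : T} {φ : Icc (0 : ℝ) (dist x y) → T}
    (hφ : ∀ t, dist x (φ t) = t ∧ dist (φ t) y = dist x y - t) : IsSegmentMap x y φ := by
  refine ⟨fun a b => le_antisymm ?_ ?_, dist_le_zero.1 ?_, dist_le_zero.1 ?_⟩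
  · rcases le_max_iff.1 (H x y (φ a) (φ b)) with h | h <;>
      linarith [(hφ a).1, (hφ a).2, (hφ b).1, (hφ b).2, le_abs_self (a.1 - b.1),
        neg_le_abs (a.1 - b.1), dist_comm y (φ a), dist_comm y (φ b)]
  · have h := abs_dist_sub_le (φ a) (φ b) x
    rwa [dist_comm (φ a), dist_comm (φ b), (hφ a).1, (hφ b).1] at h
  · rw [dist_comm, (hφ _).1]
  · rw [(hφ _).2, sub_self]

theorem existsUnique_isSegmentMap [PreconnectedSpace T] (H : FourPointCondition T) (x y : T) :
    ∃! φ : Icc (0 : ℝ) (dist x y) → T, IsSegmentMap x y φ := by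
  choose φ hφ using fun t : Icc (0 : ℝ) (dist x y) => H.exists_dist_eq x y t.2.1 t.2.2
  exact ⟨φ, H.isSegmentMap hφ, fun ψ hψ => funext fun t =>
    H.eq_of_dist_eq (hψ.dist_left t) (hψ.dist_right t) (hφ t).1 (hφ t).2⟩

theorem mem_of_isPreconnected (H : FourPointCondition T) {S : Set T} (hS : IsPreconnected S)
    {p q m : T} (hp : p ∈ S) (hq : q ∈ S) (hm : dist p q = dist p m + dist m q) : m ∈ S := by
  by_contra hmS
  -- `0 < (r|p)_m` says that `r` and `p` lie in the same branch at `m`.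
  have hV : IsOpen {r | gromovProduct m r p ≤ 0 ∧ r ≠ m} := by
    refine Metric.isOpen_iff.2 fun r ⟨hr, hrm⟩ =>
      ⟨dist m r, dist_pos.2 hrm.symm, fun r' hr' => ⟨not_lt.1 fun hr'p => ?_, ?_⟩⟩
    · have hrr' := dist_sub_dist_le_gromovProduct m r r'
      have hmin := fourPointCondition_iff.1 H r p r' m
      rw [Metric.mem_ball, dist_comm] at hr'
      rcases min_le_iff.1 hmin with h | h <;> linarith
    · rintro rfl
      rw [Metric.mem_ball, dist_comm] at hr'
      exact lt_irrefl _ hr'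
  obtain ⟨r, -, hrU, hrV, -⟩ := hS _ _
    (isOpen_lt continuous_const (continuous_gromovProduct_left m p)) hV
    (fun r hr => (lt_or_ge 0 (gromovProduct m r p)).imp id
      fun h => ⟨h, ne_of_mem_of_not_mem hr hmS⟩)
    ⟨p, hp, by simpa [gromovProduct] using dist_pos.2 (ne_of_mem_of_not_mem hp hmS).symm⟩
    ⟨q, hq, by simp only [gromovProduct]; linarith [dist_comm m p, dist_comm q p],
      ne_of_mem_of_not_mem hq hmS⟩
  exact absurd hrU (not_lt.2 hrV)

theorem exists_mem_range_dist_eq (H : FourPointCondition T) {a b : T}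
    {φ : Icc (0 : ℝ) (dist a b) → T} (hφ : IsSegmentMap a b φ) (p : T) :
    ∃ m ∈ range φ, dist a p = dist a m + dist m p ∧ dist p b = dist p m + dist m b := by
  set s := gromovProduct a p b with hs_def
  have hpb : dist p b = dist a p + dist a b - 2 * s := by rw [hs_def, gromovProduct]; ring
  have hs : s ∈ Icc 0 (dist a b) :=
    ⟨gromovProduct_nonneg a p b, gromovProduct_le_dist_right a p b⟩
  have ham := hφ.dist_left ⟨s, hs⟩
  have hmb := hφ.dist_right ⟨s, hs⟩
  set m := φ ⟨s, hs⟩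
  have hpm : dist m p = dist a p - s := by
    refine le_antisymm ?_ (by linarith [dist_triangle a m p])
    rcases le_max_iff.1 (H p m a b) with h | h <;>
      linarith [dist_comm p a, dist_comm m a, dist_comm m p]
  exact ⟨m, mem_range_self _, by linarith, by linarith [dist_comm p m]⟩

theorem range_eq_range (H : FourPointCondition T) {c : unitInterval → T} (hc : Continuous c)
    (hinj : Injective c) {φ : Icc (0 : ℝ) (dist (c 0) (c 1)) → T}
    (hφ : IsSegmentMap (c 0) (c 1) φ) : range c = range φ := by
  refine Subset.antisymm ?_ ?_
  · rintro _ ⟨s, rfl⟩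
    obtain ⟨m, hm, h₀m, hm₁⟩ := H.exists_mem_range_dist_eq hφ (c s)
    obtain ⟨s₁, hs₁, rfl⟩ := H.mem_of_isPreconnected
      (isPreconnected_Iic.image c hc.continuousOn)
      (mem_image_of_mem c (mem_Iic.2 unitInterval.nonneg')) (mem_image_of_mem c (mem_Iic.2 le_rfl))
      h₀m
    obtain ⟨s₂, hs₂, hs₁₂⟩ := H.mem_of_isPreconnected
      (isPreconnected_Ici.image c hc.continuousOn)
      (mem_image_of_mem c (mem_Ici.2 le_rfl)) (mem_image_of_mem c (mem_Ici.2 unitInterval.le_one'))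
      hm₁
    have hs : s₁ = s := le_antisymm hs₁ (hinj hs₁₂ ▸ hs₂)
    exact hs ▸ hm
  · rintro _ ⟨t, rfl⟩
    refine H.mem_of_isPreconnected (isPreconnected_range hc) (mem_range_self 0)
      (mem_range_self 1) ?_
    rw [hφ.dist_left, hφ.dist_right]
    ring

end FourPointCondition

namespace IsRTree

variable {h : IsRTree T}

/-- The segment from `x` to `y`, parametrized by arc length and constant outside
`[0, dist x y]`. -/
noncomputable def segment (h : IsRTree T) (x y : T) : ℝ → T :=
  IccExtend dist_nonneg (h.1 x y).exists.choose

theorem isSegmentMap_segment (x y : T) : IsSegmentMap x y fun t => h.segment x y t := by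
  simpa only [segment, IccExtend_val] using (h.1 x y).exists.choose_spec

theorem continuous_segment (x y : T) : Continuous (h.segment x y) :=
  (h.1 x y).exists.choose_spec.isometry.continuous.Icc_extend'

theorem segment_zero (x y : T) : h.segment x y 0 = x :=
  (h.isSegmentMap_segment x y).2.1

theorem segment_dist (x y : T) : h.segment x y (dist x y) = y :=
  (h.isSegmentMap_segment x y).2.2

theorem dist_segment_segment {x y : T} {a b : ℝ} (ha : a ∈ Icc 0 (dist x y))
    (hb : b ∈ Icc 0 (dist x y)) : dist (h.segment x y a) (h.segment x y b) = |a - b| :=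
  (h.isSegmentMap_segment x y).1 ⟨a, ha⟩ ⟨b, hb⟩

theorem dist_segment_left {x y : T} {t : ℝ} (ht : t ∈ Icc 0 (dist x y)) :
    dist x (h.segment x y t) = t :=
  (h.isSegmentMap_segment x y).dist_left ⟨t, ht⟩

theorem dist_segment_right {x y : T} {t : ℝ} (ht : t ∈ Icc 0 (dist x y)) :
    dist (h.segment x y t) y = dist x y - t :=
  (h.isSegmentMap_segment x y).dist_right ⟨t, ht⟩

theorem segment_eq_of_isSegmentMap {x y : T} {f : ℝ → T} (hf : IsSegmentMap x y fun t => f t)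
    {t : ℝ} (ht : t ∈ Icc 0 (dist x y)) : f t = h.segment x y t :=
  congrFun ((h.1 x y).unique hf (h.isSegmentMap_segment x y)) ⟨t, ht⟩

theorem segment_eq_segment_of_le {x y z : T} {s r : ℝ} (hy : s ∈ Icc 0 (dist x y))
    (hz : s ∈ Icc 0 (dist x z)) (hs : h.segment x y s = h.segment x z s) (hr : r ∈ Icc 0 s) :
    h.segment x y r = h.segment x z r := by
  set q := h.segment x y s
  have hxq : dist x q = s := dist_segment_left hy
  have hrestrict : ∀ w, s ≤ dist x w → h.segment x w s = q →
      h.segment x w r = h.segment x q r := fun w hw hwq =>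
    segment_eq_of_isSegmentMap ⟨fun a b => dist_segment_segment
      ⟨a.2.1, (a.2.2.trans hxq.le).trans hw⟩ ⟨b.2.1, (b.2.2.trans hxq.le).trans hw⟩,
      h.segment_zero x w, show h.segment x w (dist x q) = q by rw [hxq, hwq]⟩ (hxq ▸ hr)
  rw [hrestrict y hy.2 rfl, hrestrict z hz.2 hs.symm]

noncomputable def segmentPath (h : IsRTree T) (x y : T) (a b : ℝ) :
    Path (h.segment x y a) (h.segment x y b) :=
  Path.ofLine (f := fun t => h.segment x y (a + t * (b - a)))
    ((h.continuous_segment x y).comp (by fun_prop)).continuousOn (by simp) (by simp)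

theorem segmentPath_apply {x y : T} {a b : ℝ} (t : unitInterval) :
    h.segmentPath x y a b t = h.segment x y (a + t * (b - a)) := rfl

theorem injective_segmentPath {x y : T} {a b : ℝ} (ha : a ∈ Icc 0 (dist x y))
    (hb : b ∈ Icc 0 (dist x y)) (hab : a ≠ b) : Injective (h.segmentPath x y a b) := by
  intro t t' htt'
  have hdist := congrArg (dist x) htt'
  rw [segmentPath_apply, segmentPath_apply, dist_segment_left (add_mul_sub_mem_Icc ha hb t),
    dist_segment_left (add_mul_sub_mem_Icc ha hb t')] at hdist
  exact Subtype.ext (mul_right_cancel₀ (sub_ne_zero.2 hab.symm) (add_left_cancel hdist))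

theorem dist_add_dist_of_mem_range (h : IsRTree T) {a b : T} {γ : Path a b}
    (hγ : Injective γ) {p : T} (hp : p ∈ range γ) : dist a p + dist p b = dist a b := by
  have key : dist (γ 0) p + dist p (γ 1) = dist (γ 0) (γ 1) := by
    obtain ⟨φ, hφ⟩ := (h.1 (γ 0) (γ 1)).exists
    rw [h.2 γ γ.continuous hγ φ hφ] at hp
    obtain ⟨t, rfl⟩ := hp
    rw [hφ.dist_left, hφ.dist_right]
    ring
  simpa only [γ.source, γ.target] using key

def agreementSet (h : IsRTree T) (x y z : T) : Set ℝ :=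
  {s ∈ Icc 0 (min (dist x y) (dist x z)) | h.segment x y s = h.segment x z s}

theorem exists_isGreatest_agreementSet (h : IsRTree T) (x y z : T) :
    ∃ s, IsGreatest (h.agreementSet x y z) s :=
  (isCompact_Icc.of_isClosed_subset
    (isClosed_Icc.inter (isClosed_eq (h.continuous_segment x y) (h.continuous_segment x z)))
    inter_subset_left).exists_isGreatest
    ⟨0, ⟨le_rfl, le_min dist_nonneg dist_nonneg⟩,
      show h.segment x y 0 = h.segment x z 0 by rw [h.segment_zero, h.segment_zero]⟩

theorem eq_of_isGreatest_of_segment_eq {x y z : T} {s r₁ r₂ : ℝ}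
    (hs : IsGreatest (h.agreementSet x y z) s) (h₁ : r₁ ∈ Icc s (dist x y))
    (h₂ : r₂ ∈ Icc s (dist x z)) (heq : h.segment x y r₁ = h.segment x z r₂) : r₁ = s := by
  have hs₀ : 0 ≤ s := hs.1.1.1
  have hr : r₁ = r₂ := by
    rw [← dist_segment_left (h := h) ⟨hs₀.trans h₁.1, h₁.2⟩, heq,
      dist_segment_left ⟨hs₀.trans h₂.1, h₂.2⟩]
  refine le_antisymm (hs.2 ⟨⟨hs₀.trans h₁.1, le_min h₁.2 (hr ▸ h₂.2)⟩, ?_⟩) h₁.1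
  rw [heq, hr]

theorem dist_eq_of_isGreatest {x y z : T} {s : ℝ} (hs : IsGreatest (h.agreementSet x y z) s) :
    dist y z = (dist x y - s) + (dist x z - s) := by
  obtain ⟨⟨hs₀, hsm⟩, hw⟩ := hs.1
  obtain ⟨hsy, hsz⟩ := le_min_iff.1 hsm
  have hyw : dist y (h.segment x y s) = dist x y - s := by
    rw [dist_comm]; exact dist_segment_right ⟨hs₀, hsy⟩
  have hwz : dist (h.segment x y s) z = dist x z - s := by
    rw [hw]; exact dist_segment_right ⟨hs₀, hsz⟩
  rw [← hyw, ← hwz]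
  rcases hsy.eq_or_lt with hy | hy
  · rw [hy, h.segment_dist, dist_self, zero_add]
  rcases hsz.eq_or_lt with hz | hz
  · rw [hw, hz, h.segment_dist, dist_self, add_zero]
  have hy₀ : dist x y ∈ Icc 0 (dist x y) := ⟨dist_nonneg, le_rfl⟩
  have hz₀ : dist x z ∈ Icc 0 (dist x z) := ⟨dist_nonneg, le_rfl⟩
  -- Back along `[x,y]` from `y` to `w`, then out along `[x,z]` from `w` to `z`: by maximality
  -- of `s` the two pieces meet only at `w`.
  set γ₁ := h.segmentPath x y (dist x y) s
  set γ₂ := (h.segmentPath x z s (dist x z)).cast hw rfl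
  have hγ : Injective (γ₁.trans γ₂) := by
    refine Path.injective_trans (injective_segmentPath hy₀ ⟨hs₀, hsy⟩ hy.ne')
      (injective_segmentPath (h := h) ⟨hs₀, hsz⟩ hz₀ hz.ne) fun t t' htt' => ?_
    have hr := eq_of_isGreatest_of_segment_eq hs
      (add_mul_sub_mem_Icc (c := s) ⟨hy.le, le_rfl⟩ ⟨le_rfl, hy.le⟩ t)
      (add_mul_sub_mem_Icc (c := s) ⟨le_rfl, hz.le⟩ ⟨hz.le, le_rfl⟩ t') htt'
    rw [segmentPath_apply, hr]
  have hbranch := h.dist_add_dist_of_mem_range hγ (p := h.segment x y s)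
    (by rw [Path.trans_range]; exact Or.inr ⟨0, γ₂.source⟩)
  rw [h.segment_dist, h.segment_dist] at hbranch
  exact hbranch.symm

theorem le_gromovProduct_of_segment_eq {x y z : T} {r : ℝ} (hy : r ∈ Icc 0 (dist x y))
    (hz : r ∈ Icc 0 (dist x z)) (heq : h.segment x y r = h.segment x z r) :
    r ≤ gromovProduct x y z := by
  have htri := dist_triangle y (h.segment x y r) z
  rw [dist_comm y (h.segment x y r), dist_segment_right hy, heq, dist_segment_right hz] at htri
  unfold gromovProduct
  linarith

theorem segment_eq_segment_of_le_gromovProduct {x y z : T} {r : ℝ} (hr₀ : 0 ≤ r)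
    (hr : r ≤ gromovProduct x y z) : h.segment x y r = h.segment x z r := by
  obtain ⟨s, hs⟩ := h.exists_isGreatest_agreementSet x y z
  have hs_eq : s = gromovProduct x y z := by
    rw [gromovProduct, dist_eq_of_isGreatest hs]
    ring
  obtain ⟨⟨hs₀, hsm⟩, hw⟩ := hs.1
  exact segment_eq_segment_of_le ⟨hs₀, (le_min_iff.1 hsm).1⟩ ⟨hs₀, (le_min_iff.1 hsm).2⟩ hw
    ⟨hr₀, hs_eq ▸ hr⟩

theorem fourPointCondition (h : IsRTree T) : FourPointCondition T := by
  refine fourPointCondition_iff.2 fun x y u v => ?_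
  set r := min (gromovProduct v x u) (gromovProduct v u y)
  have hr₀ : 0 ≤ r := le_min (gromovProduct_nonneg v x u) (gromovProduct_nonneg v u y)
  have hxu : h.segment v x r = h.segment v u r :=
    segment_eq_segment_of_le_gromovProduct hr₀ (min_le_left _ _)
  have huy : h.segment v u r = h.segment v y r :=
    segment_eq_segment_of_le_gromovProduct hr₀ (min_le_right _ _)
  exact le_gromovProduct_of_segment_eq
    ⟨hr₀, (min_le_left _ _).trans (gromovProduct_le_dist_left v x u)⟩
    ⟨hr₀, (min_le_right _ _).trans (gromovProduct_le_dist_right v u y)⟩ (hxu.trans huy)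

theorem pathConnectedSpace [Nonempty T] (h : IsRTree T) : PathConnectedSpace T where
  nonempty := ‹_›
  joined x y := ⟨(h.segmentPath x y 0 (dist x y)).cast (h.segment_zero x y).symm
    (h.segment_dist x y).symm⟩

end IsRTree

end MetricSpace

/-- A metric space is an `ℝ`-tree iff it is connected and satisfies the
four-point condition. -/
theorem stmt1 (T : Type*) [MetricSpace T] [Nonempty T] :
    IsRTree T ↔ ConnectedSpace T ∧
      ∀ x y u v : T, dist x y + dist u v ≤
        max (dist x u + dist y v) (dist x v + dist y u) := by
  refine ⟨fun h => ⟨h.pathConnectedSpace.connectedSpace, h.fourPointCondition⟩, ?_⟩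
  rintro ⟨_, H⟩
  have H : FourPointCondition T := H
  exact ⟨H.existsUnique_isSegmentMap, fun c hc hinj φ hφ => H.range_eq_range hc hinj hφ⟩
end

section
/- Let $T$ be a compact rooted $\mathbb{R}$-tree with root $\rho$. The collection $\mathcal{B}$ of pre-balls — sets of the form $B(x,C) = T_x \setminus \bigcup_{y \in C} T_y$ where $x \in T$, $C$ is a finite subset of $T_x$ whose elements are all $\ge x$ and pairwise incomparable, and $T_z = \{w \in T : z \le w\}$ — is a semi-ring of sets: it contains the empty set, is closed under pairwise intersection, and the set difference of two pre-balls is a finite disjoint union of pre-balls. -/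
/-- The tree partial order rooted at `ρ`: `x ≤ y` iff `x` lies on the geodesic
segment from `ρ` to `y`. -/
def treeLE {T : Type*} [MetricSpace T] (ρ x y : T) : Prop :=
  dist ρ x + dist x y = dist ρ y

/-- The subtree `T_x = {w : x ≤ w}` above `x`. -/
def subtreeAt {T : Type*} [MetricSpace T] (ρ x : T) : Set T :=
  {w | treeLE ρ x w}

/-- The collection of pre-balls `B(x, C) = T_x \ ⋃_{y ∈ C} T_y`, where `C`
is a finite pre-cutset of `T_x` (all elements `≥ x`, pairwise incomparable). -/
def preBalls {T : Type*} [MetricSpace T] (ρ : T) : Set (Set T) :=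
  {B | ∃ (x : T) (C : Finset T),
    (∀ y ∈ C, treeLE ρ x y) ∧
    (∀ y ∈ C, ∀ z ∈ C, y ≠ z → ¬ treeLE ρ y z) ∧
    B = subtreeAt ρ x \ ⋃ y ∈ C, subtreeAt ρ y}

section Geodesic

variable {T : Type*} [MetricSpace T] {a b u : T} {φ : Set.Icc (0 : ℝ) (dist a b) → T}

lemma IsSegmentMap.dist_left_s13 (h : IsSegmentMap a b φ) (t : Set.Icc (0 : ℝ) (dist a b)) :
    dist a (φ t) = t := by
  have := h.1 ⟨0, Set.left_mem_Icc.mpr dist_nonneg⟩ t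
  rw [h.2.1, abs_sub_comm, sub_zero, abs_of_nonneg t.2.1] at this
  exact this

lemma IsSegmentMap.dist_right_s13 (h : IsSegmentMap a b φ) (t : Set.Icc (0 : ℝ) (dist a b)) :
    dist (φ t) b = dist a b - t := by
  have := h.1 t ⟨dist a b, Set.right_mem_Icc.mpr dist_nonneg⟩
  rwa [h.2.2, abs_sub_comm, abs_of_nonneg (sub_nonneg.mpr t.2.2)] at this

lemma IsSegmentMap.dist_apply_apply_of_dist_add_dist {φ₁ : Set.Icc (0 : ℝ) (dist a u) → T}
    {φ₂ : Set.Icc (0 : ℝ) (dist u b) → T} (h₁ : IsSegmentMap a u φ₁) (h₂ : IsSegmentMap u b φ₂)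
    (hu : dist a u + dist u b = dist a b) (p : Set.Icc (0 : ℝ) (dist a u))
    (q : Set.Icc (0 : ℝ) (dist u b)) :
    dist (φ₁ p) (φ₂ q) = (dist a u - p) + q := by
  have := dist_triangle (φ₁ p) u (φ₂ q)
  have := dist_triangle a (φ₁ p) (φ₂ q)
  have := dist_triangle a (φ₂ q) b
  have := h₁.dist_left_s13 p
  have := h₁.dist_right_s13 p
  have := h₂.dist_left_s13 q
  have := h₂.dist_right_s13 q
  apply le_antisymm <;> linarith

lemma IsSegmentMap.exists_concat {φ₁ : Set.Icc (0 : ℝ) (dist a u) → T}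
    {φ₂ : Set.Icc (0 : ℝ) (dist u b) → T} (h₁ : IsSegmentMap a u φ₁) (h₂ : IsSegmentMap u b φ₂)
    (hu : dist a u + dist u b = dist a b) :
    ∃ ψ : Set.Icc (0 : ℝ) (dist a b) → T, IsSegmentMap a b ψ ∧
      ∀ t (ht : t.1 ≤ dist a u), ψ t = φ₁ ⟨t, t.2.1, ht⟩ := by
  have hmem₂ (t : Set.Icc (0 : ℝ) (dist a b)) (ht : ¬ t.1 ≤ dist a u) :
      t.1 - dist a u ∈ Set.Icc 0 (dist u b) :=
    ⟨by linarith [not_le.mp ht], by linarith [t.2.2]⟩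
  let ψ : Set.Icc (0 : ℝ) (dist a b) → T := fun t =>
    if ht : t.1 ≤ dist a u then φ₁ ⟨t, t.2.1, ht⟩ else φ₂ ⟨t - dist a u, hmem₂ t ht⟩
  have hψ₁ (t) (ht : t.1 ≤ dist a u) : ψ t = φ₁ ⟨t, t.2.1, ht⟩ := dif_pos ht
  have hψ₂ (t) (ht : ¬ t.1 ≤ dist a u) : ψ t = φ₂ ⟨t - dist a u, hmem₂ t ht⟩ := dif_neg ht
  have hdist (p q : Set.Icc (0 : ℝ) (dist a b)) (hpq : p.1 ≤ q.1) :
      dist (ψ p) (ψ q) = q - p := by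
    by_cases hq : q.1 ≤ dist a u
    · rw [hψ₁ p (hpq.trans hq), hψ₁ q hq, h₁.1, abs_sub_comm,
        abs_of_nonneg (sub_nonneg.mpr hpq)]
    by_cases hp : p.1 ≤ dist a u
    · rw [hψ₁ p hp, hψ₂ q hq, h₁.dist_apply_apply_of_dist_add_dist h₂ hu]
      ring
    · rw [hψ₂ p hp, hψ₂ q hq, h₂.1, abs_sub_comm, abs_of_nonneg (by simp only; linarith)]
      ring
  refine ⟨ψ, ⟨fun p q => ?_, ?_, ?_⟩, hψ₁⟩
  · rcases le_total p.1 q.1 with hpq | hqp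
    · rw [hdist p q hpq, abs_sub_comm, abs_of_nonneg (sub_nonneg.mpr hpq)]
    · rw [dist_comm, hdist q p hqp, abs_of_nonneg (sub_nonneg.mpr hqp)]
  · rw [hψ₁ _ dist_nonneg]
    exact h₁.2.1
  · apply dist_eq_zero.mp
    set t : Set.Icc (0 : ℝ) (dist a b) := ⟨dist a b, Set.right_mem_Icc.mpr dist_nonneg⟩
    by_cases ht : t.1 ≤ dist a u
    · rw [hψ₁ t ht]
      have := dist_triangle (φ₁ ⟨t, t.2.1, ht⟩) u b
      have := h₁.dist_right_s13 ⟨t, t.2.1, ht⟩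
      linarith [dist_nonneg (x := φ₁ ⟨t, t.2.1, ht⟩) (y := b), dist_nonneg (x := u) (y := b)]
    · rw [hψ₂ t ht, h₂.dist_right_s13]
      simp only [t]
      linarith

lemma IsSegmentMap.apply_eq_of_dist_add_dist
    (hT : ∀ x y : T, ∃! φ : Set.Icc (0 : ℝ) (dist x y) → T, IsSegmentMap x y φ)
    (h : IsSegmentMap a b φ) (hu : dist a u + dist u b = dist a b) :
    φ ⟨dist a u, dist_nonneg, hu ▸ le_add_of_nonneg_right dist_nonneg⟩ = u := by
  obtain ⟨φ₁, h₁, -⟩ := hT a u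
  obtain ⟨φ₂, h₂, -⟩ := hT u b
  obtain ⟨ψ, hψ, hψφ₁⟩ := h₁.exists_concat h₂ hu
  rw [(hT a b).unique h hψ, hψφ₁ _ le_rfl]
  exact h₁.2.2

end Geodesic

section TreeOrder

variable {T : Type*} [MetricSpace T] {ρ x y z : T}

def IsTreeOrder (ρ : T) : Prop :=
  ∀ ⦃x y w : T⦄, treeLE ρ x w → treeLE ρ y w → treeLE ρ x y ∨ treeLE ρ y x

lemma treeLE_refl (ρ x : T) : treeLE ρ x x := by
  simp [treeLE]

lemma treeLE_trans (hxy : treeLE ρ x y) (hyz : treeLE ρ y z) : treeLE ρ x z := by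
  unfold treeLE at *
  linarith [dist_triangle ρ x z, dist_triangle x y z]

lemma treeLE.eq_of_dist_le (h : treeLE ρ x y) (hd : dist ρ y ≤ dist ρ x) : x = y := by
  unfold treeLE at h
  exact dist_eq_zero.mp (le_antisymm (by linarith) dist_nonneg)

lemma isTreeOrder_of_existsUnique_segmentMap
    (hT : ∀ x y : T, ∃! φ : Set.Icc (0 : ℝ) (dist x y) → T, IsSegmentMap x y φ) (ρ : T) :
    IsTreeOrder ρ := by
  intro x y w hx hy
  obtain ⟨φ, hφ, -⟩ := hT ρ w
  have hdist := hφ.1 ⟨dist ρ x, dist_nonneg, hx ▸ le_add_of_nonneg_right dist_nonneg⟩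
    ⟨dist ρ y, dist_nonneg, hy ▸ le_add_of_nonneg_right dist_nonneg⟩
  rw [hφ.apply_eq_of_dist_add_dist hT hx, hφ.apply_eq_of_dist_add_dist hT hy] at hdist
  unfold treeLE
  rcases le_total (dist ρ x) (dist ρ y) with hxy | hyx
  · rw [abs_sub_comm, abs_of_nonneg (sub_nonneg.mpr hxy)] at hdist
    left; linarith
  · rw [abs_of_nonneg (sub_nonneg.mpr hyx), dist_comm] at hdist
    right; linarith

lemma subtreeAt_subset_subtreeAt (h : treeLE ρ x y) : subtreeAt ρ y ⊆ subtreeAt ρ x :=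
  fun _ hw => treeLE_trans h hw

lemma disjoint_subtreeAt (h : IsTreeOrder ρ) (hxy : ¬ treeLE ρ x y) (hyx : ¬ treeLE ρ y x) :
    Disjoint (subtreeAt ρ x) (subtreeAt ρ y) :=
  Set.disjoint_left.mpr fun _ hx hy => (h hx hy).elim hxy hyx

open Classical in
noncomputable def treeMinimals (ρ : T) (S : Finset T) : Finset T :=
  S.filter fun m => ∀ z ∈ S, treeLE ρ z m → z = m

lemma mem_treeMinimals {S : Finset T} :
    y ∈ treeMinimals ρ S ↔ y ∈ S ∧ ∀ z ∈ S, treeLE ρ z y → z = y := by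
  classical
  simp only [treeMinimals, Finset.mem_filter]

lemma treeMinimals_subset (ρ : T) (S : Finset T) : treeMinimals ρ S ⊆ S :=
  fun _ hy => (mem_treeMinimals.mp hy).1

lemma treeMinimals_antichain {S : Finset T} (hy : y ∈ treeMinimals ρ S)
    (hz : z ∈ treeMinimals ρ S) (hyz : y ≠ z) : ¬ treeLE ρ y z :=
  fun h => hyz ((mem_treeMinimals.mp hz).2 y (mem_treeMinimals.mp hy).1 h)

lemma exists_mem_treeMinimals_treeLE {S : Finset T} (hy : y ∈ S) :
    ∃ m ∈ treeMinimals ρ S, treeLE ρ m y := by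
  classical
  obtain ⟨m, hm, hmin⟩ := (S.filter fun z => treeLE ρ z y).exists_min_image (dist ρ)
    ⟨y, Finset.mem_filter.mpr ⟨hy, treeLE_refl ρ y⟩⟩
  obtain ⟨hmS, hmy⟩ := Finset.mem_filter.mp hm
  refine ⟨m, mem_treeMinimals.mpr ⟨hmS, fun z hz hzm => ?_⟩, hmy⟩
  exact hzm.eq_of_dist_le (hmin z (Finset.mem_filter.mpr ⟨hz, treeLE_trans hzm hmy⟩))

lemma biUnion_subtreeAt_treeMinimals (ρ : T) (S : Finset T) :
    ⋃ y ∈ treeMinimals ρ S, subtreeAt ρ y = ⋃ y ∈ S, subtreeAt ρ y := by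
  refine subset_antisymm (Set.biUnion_subset_biUnion_left (treeMinimals_subset ρ S)) ?_
  refine Set.iUnion₂_subset fun y hy => ?_
  obtain ⟨m, hm, hmy⟩ := exists_mem_treeMinimals_treeLE (ρ := ρ) hy
  exact (subtreeAt_subset_subtreeAt hmy).trans
    (Finset.subset_set_biUnion_of_mem (f := subtreeAt ρ) hm)

end TreeOrder

section PreBalls

variable {T : Type*} [MetricSpace T] {ρ : T} {A B : Set T}

lemma empty_mem_preBalls (ρ : T) : ∅ ∈ preBalls ρ :=
  ⟨ρ, {ρ}, by simp [treeLE_refl], by simp, by simp⟩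

lemma subtreeAt_mem_preBalls (ρ x : T) : subtreeAt ρ x ∈ preBalls ρ :=
  ⟨x, ∅, by simp, by simp, by simp⟩

/-- Subtrees containing `T_x` empty it, subtrees disjoint from `T_x` can be dropped, and among
the remaining ones only the minimal ones matter. -/
lemma subtreeAt_sdiff_biUnion_mem_preBalls (h : IsTreeOrder ρ) (x : T) (C : Finset T) :
    subtreeAt ρ x \ ⋃ y ∈ C, subtreeAt ρ y ∈ preBalls ρ := by
  classical
  by_cases hC : ∃ y ∈ C, treeLE ρ y x
  · obtain ⟨y, hy, hyx⟩ := hC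
    rw [Set.sdiff_eq_empty.mpr ((subtreeAt_subset_subtreeAt hyx).trans
      (Finset.subset_set_biUnion_of_mem (f := subtreeAt ρ) hy))]
    exact empty_mem_preBalls ρ
  push Not at hC
  set S := C.filter fun y => treeLE ρ x y
  refine ⟨x, treeMinimals ρ S, fun y hy => (Finset.mem_filter.mp (treeMinimals_subset ρ S hy)).2,
    fun y hy z hz => treeMinimals_antichain hy hz, ?_⟩
  rw [biUnion_subtreeAt_treeMinimals]
  ext w
  simp only [Set.mem_sdiff, Set.mem_iUnion₂, Finset.mem_filter, S, exists_prop]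
  refine and_congr_right fun hxw =>
    not_congr ⟨fun ⟨y, hy, hyw⟩ => ?_, fun ⟨y, ⟨hy, _⟩, hyw⟩ => ⟨y, hy, hyw⟩⟩
  exact (h hxw hyw).elim (fun hxy => ⟨y, ⟨hy, hxy⟩, hyw⟩) (fun hyx => (hC y hy hyx).elim)

lemma inter_mem_preBalls (h : IsTreeOrder ρ) (hA : A ∈ preBalls ρ) (hB : B ∈ preBalls ρ) :
    A ∩ B ∈ preBalls ρ := by
  classical
  obtain ⟨x, C, -, -, rfl⟩ := hA
  obtain ⟨x', C', -, -, rfl⟩ := hB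
  wlog hxx' : treeLE ρ x x' generalizing x x' C C'
  · by_cases hx'x : treeLE ρ x' x
    · rw [Set.inter_comm]
      exact this x' C' x C hx'x
    · rw [((disjoint_subtreeAt h hxx' hx'x).mono Set.sdiff_subset Set.sdiff_subset).inter_eq]
      exact empty_mem_preBalls ρ
  have hsub := subtreeAt_subset_subtreeAt (ρ := ρ) hxx'
  convert subtreeAt_sdiff_biUnion_mem_preBalls h x' (C ∪ C') using 1
  rw [Finset.set_biUnion_union]
  ext w
  simp only [Set.mem_inter_iff, Set.mem_sdiff, Set.mem_union]
  have := @hsub w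
  tauto

lemma sdiff_subtreeAt_mem_preBalls (h : IsTreeOrder ρ) (hA : A ∈ preBalls ρ) (y : T) :
    A \ subtreeAt ρ y ∈ preBalls ρ := by
  classical
  obtain ⟨x, C, -, -, rfl⟩ := hA
  rw [Set.sdiff_sdiff, Set.union_comm, ← Finset.set_biUnion_insert]
  exact subtreeAt_sdiff_biUnion_mem_preBalls h x (insert y C)

lemma exists_finset_preBalls_sdiff_eq_sUnion (h : IsTreeOrder ρ) (hA : A ∈ preBalls ρ)
    (hB : B ∈ preBalls ρ) :
    ∃ F : Finset (Set T), (↑F : Set (Set T)) ⊆ preBalls ρ ∧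
      ((F : Set (Set T)).Pairwise fun U V => Disjoint U V) ∧ A \ B = ⋃₀ ↑F := by
  classical
  obtain ⟨x', C', hC'x', hC'anti, rfl⟩ := hB
  refine ⟨insert (A \ subtreeAt ρ x') (C'.image fun y => A ∩ subtreeAt ρ y), ?_, ?_, ?_⟩
  · rw [Finset.coe_insert, Finset.coe_image, Set.insert_subset_iff, Set.image_subset_iff]
    exact ⟨sdiff_subtreeAt_mem_preBalls h hA x',
      fun y _ => inter_mem_preBalls h hA (subtreeAt_mem_preBalls ρ y)⟩
  · rw [Finset.coe_insert, Finset.coe_image, Set.pairwise_insert]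
    refine ⟨Set.Pairwise.image fun y hy z hz hyz => ?_, ?_⟩
    · exact (disjoint_subtreeAt h (hC'anti y hy z hz hyz) (hC'anti z hz y hy hyz.symm)).mono
        Set.inter_subset_right Set.inter_subset_right
    · rintro _ ⟨y, hy, rfl⟩ -
      have hdisj : Disjoint (A \ subtreeAt ρ x') (A ∩ subtreeAt ρ y) :=
        Set.disjoint_sdiff_left.mono_right
          (Set.inter_subset_right.trans (subtreeAt_subset_subtreeAt (hC'x' y hy)))
      exact ⟨hdisj, hdisj.symm⟩
  · rw [Set.sdiff_sdiff_right, Set.inter_iUnion₂, Finset.coe_insert, Set.sUnion_insert,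
      Finset.coe_image, Set.sUnion_image]
    simp only [Finset.mem_coe]

end PreBalls

theorem stmt13_general (T : Type*) [MetricSpace T]
    (hT : IsRTree T) (ρ : T) :
    ∅ ∈ preBalls ρ ∧
    (∀ A ∈ preBalls ρ, ∀ B ∈ preBalls ρ, A ∩ B ∈ preBalls ρ) ∧
    (∀ A ∈ preBalls ρ, ∀ B ∈ preBalls ρ, ∃ F : Finset (Set T),
      (↑F : Set (Set T)) ⊆ preBalls ρ ∧
      ((F : Set (Set T)).Pairwise fun U V => Disjoint U V) ∧
      A \ B = ⋃₀ ↑F) := by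
  have h := isTreeOrder_of_existsUnique_segmentMap hT.1 ρ
  exact ⟨empty_mem_preBalls ρ, fun _ hA _ hB => inter_mem_preBalls h hA hB,
    fun _ hA _ hB => exists_finset_preBalls_sdiff_eq_sUnion h hA hB⟩

/-- In a compact rooted `ℝ`-tree, the pre-balls form a semi-ring of sets:
the collection contains `∅`, is closed under pairwise intersection, and the
difference of two pre-balls is a finite disjoint union of pre-balls. -/
theorem stmt13 (T : Type*) [MetricSpace T] [CompactSpace T]
    (hT : IsRTree T) (ρ : T) :
    ∅ ∈ preBalls ρ ∧
    (∀ A ∈ preBalls ρ, ∀ B ∈ preBalls ρ, A ∩ B ∈ preBalls ρ) ∧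
    (∀ A ∈ preBalls ρ, ∀ B ∈ preBalls ρ, ∃ F : Finset (Set T),
      (↑F : Set (Set T)) ⊆ preBalls ρ ∧
      ((F : Set (Set T)).Pairwise fun U V => Disjoint U V) ∧
      A \ B = ⋃₀ ↑F) :=
  stmt13_general T hT ρ
end

section
/- The map from $\ell^1$ (summable real sequences) to compact subsets of $\ell^1$ defined by $x \mapsto \llbracket 0, x\rrbracket := \bigcup_{n=0}^{\infty} [p_n(x), p_{n+1}(x)]$, where $p_n$ is the projection setting all coordinates after the first $n$ to zero and $[a,b]$ denotes the line segment between $a$ and $b$, is 1-Lipschitz for the Hausdorff distance: $d_H(\llbracket 0,x\rrbracket, \llbracket 0,y\rrbracket) \le \|x - y\|_1$. -/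
open Metric

instance : Fact ((1 : ENNReal) ≤ 1) := ⟨le_rfl⟩

/-- The space `ℓ¹` of summable real sequences. -/
abbrev Ell1 : Type := lp (fun _ : ℕ => ℝ) 1

/-- The projection `p_n` keeping the first `n` coordinates and setting the
others to `0`. -/
noncomputable def projN (n : ℕ) (x : Ell1) : Ell1 :=
  ∑ i ∈ Finset.range n, lp.single 1 i (x i)

/-- The stick-breaking path `⟦0, x⟧ = ⋃ₙ [pₙ(x), pₙ₊₁(x)]`. -/
noncomputable def stick (x : Ell1) : Set Ell1 :=
  ⋃ n : ℕ, segment ℝ (projN n x) (projN (n + 1) x)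

/-!
`⟦0, x⟧` is the polygonal path through the vertices `pₙ(x)`, which converge to `x`. The
polygonal path of a Cauchy sequence is totally bounded: past some index `N` all segments lie in
a small ball around the `N`-th vertex (balls are convex), and the first `N` segments are
compact. Two polygonal paths whose `n`-th vertices are within `r` of each other for every `n`
are within Hausdorff distance `r`, since matching convex combinations of the vertices are; and
`pₙ` is a linear contraction of `ℓ¹`.
-/

section PolygonalPath

variable {E : Type*} [SeminormedAddCommGroup E] [NormedSpace ℝ E]

def polygonalPath (u : ℕ → E) : Set E :=
  ⋃ n, segment ℝ (u n) (u (n + 1))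

theorem isCompact_segment (p q : E) : IsCompact (segment ℝ p q) := by
  rw [segment_eq_image]
  exact isCompact_Icc.image (by fun_prop)

theorem exists_mem_segment_dist_le {p q p' q' z : E} {r : ℝ} (hp : dist p p' ≤ r)
    (hq : dist q q' ≤ r) (hz : z ∈ segment ℝ p q) : ∃ w ∈ segment ℝ p' q', dist z w ≤ r := by
  obtain ⟨a, b, ha, hb, hab, rfl⟩ := hz
  refine ⟨a • p' + b • q', ⟨a, b, ha, hb, hab, rfl⟩, ?_⟩
  rw [dist_eq_norm] at hp hq ⊢
  have hcombo := convex_closedBall (0 : E) r (mem_closedBall_zero_iff.2 hp)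
    (mem_closedBall_zero_iff.2 hq) ha hb hab
  rw [show a • p + b • q - (a • p' + b • q') = a • (p - p') + b • (q - q') by module]
  exact mem_closedBall_zero_iff.1 hcombo

theorem exists_mem_polygonalPath_dist_le {u v : ℕ → E} {r : ℝ} (h : ∀ n, dist (u n) (v n) ≤ r)
    {z : E} (hz : z ∈ polygonalPath u) : ∃ w ∈ polygonalPath v, dist z w ≤ r := by
  obtain ⟨n, hn⟩ := Set.mem_iUnion.1 hz
  obtain ⟨w, hw, hzw⟩ := exists_mem_segment_dist_le (h n) (h (n + 1)) hn
  exact ⟨w, Set.mem_iUnion.2 ⟨n, hw⟩, hzw⟩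

theorem hausdorffDist_polygonalPath_le {u v : ℕ → E} {r : ℝ} (h : ∀ n, dist (u n) (v n) ≤ r) :
    hausdorffDist (polygonalPath u) (polygonalPath v) ≤ r :=
  hausdorffDist_le_of_mem_dist (dist_nonneg.trans (h 0))
    (fun _ => exists_mem_polygonalPath_dist_le h)
    (fun _ => exists_mem_polygonalPath_dist_le fun n => dist_comm (u n) (v n) ▸ h n)

theorem totallyBounded_polygonalPath {u : ℕ → E} (hu : CauchySeq u) :
    TotallyBounded (polygonalPath u) := by
  rw [Metric.totallyBounded_iff]
  intro ε hε
  obtain ⟨N, hN⟩ := Metric.cauchySeq_iff'.1 hu ε hε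
  have hhead : IsCompact (⋃ n ∈ Finset.range N, segment ℝ (u n) (u (n + 1))) :=
    (Finset.range N).isCompact_biUnion fun n _ => isCompact_segment _ _
  obtain ⟨t, ht, hhead_sub⟩ := Metric.totallyBounded_iff.1 hhead.totallyBounded ε hε
  refine ⟨insert (u N) t, ht.insert _, fun z hz => ?_⟩
  obtain ⟨n, hn⟩ := Set.mem_iUnion.1 hz
  rcases lt_or_ge n N with hnN | hNn
  · obtain ⟨y, hy, hzy⟩ :=
      Set.mem_iUnion₂.1 (hhead_sub (Set.mem_biUnion (Finset.mem_range.2 hnN) hn))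
    exact Set.mem_biUnion (Set.mem_insert_of_mem _ hy) hzy
  · have htail : segment ℝ (u n) (u (n + 1)) ⊆ ball (u N) ε :=
      (convex_ball _ _).segment_subset (hN n hNn) (hN (n + 1) (by omega))
    exact Set.mem_biUnion (Set.mem_insert _ _) (htail hn)

end PolygonalPath

theorem stick_eq_polygonalPath (x : Ell1) : stick x = polygonalPath (projN · x) := rfl

theorem tendsto_projN (x : Ell1) : Filter.Tendsto (fun n => projN n x) Filter.atTop (nhds x) :=
  (lp.hasSum_single ENNReal.one_ne_top x).tendsto_sum_nat

theorem projN_sub (n : ℕ) (x y : Ell1) : projN n (x - y) = projN n x - projN n y := by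
  simp only [projN, ← Finset.sum_sub_distrib, ← lp.single_sub, lp.coeFn_sub, Pi.sub_apply]

theorem norm_projN_le (n : ℕ) (x : Ell1) : ‖projN n x‖ ≤ ‖x‖ := by
  have hnorm : ‖projN n x‖ = ∑ i ∈ Finset.range n, ‖x i‖ := by
    simpa [projN] using lp.norm_sum_single (p := 1) (by norm_num) x (Finset.range n)
  have hsum : HasSum (fun i => ‖x i‖) ‖x‖ := by
    simpa using lp.hasSum_norm (p := 1) (by norm_num) x
  rw [hnorm]
  exact sum_le_hasSum _ (fun i _ => norm_nonneg _) hsum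

theorem dist_projN_le (n : ℕ) (x y : Ell1) : dist (projN n x) (projN n y) ≤ ‖x - y‖ := by
  rw [dist_eq_norm, ← projN_sub]
  exact norm_projN_le n (x - y)

/-- The stick-breaking map `x ↦ ⟦0, x⟧` takes values in (pre)compact subsets of
`ℓ¹` and is 1-Lipschitz for the Hausdorff distance:
`d_H(⟦0,x⟧, ⟦0,y⟧) ≤ ‖x - y‖₁`. -/
theorem stmt17 :
    (∀ x : Ell1, IsCompact (closure (stick x))) ∧
    ∀ x y : Ell1, hausdorffDist (stick x) (stick y) ≤ ‖x - y‖ := by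
  simp only [stick_eq_polygonalPath]
  refine ⟨fun x => ?_, fun x y => hausdorffDist_polygonalPath_le (dist_projN_le · x y)⟩
  exact (totallyBounded_polygonalPath (tendsto_projN x).cauchySeq).closure.isCompact_of_isClosed
    isClosed_closure
end
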